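/- arXiv:2109.15281 — 6 statements merged into one kernel-verified Lean document; each statement's English description precedes it below -/
import Mathlib

section
/- Let p be an odd prime and let v ∈ ℤ^p be a circular vector. Then every entry of the vector A_p^{p−1} v is divisible by p, and moreover A_p^{p−1} v is again a circular vector. -/
/-!
The matrix `A_p` is the forward difference `Δ v (i) = v (i + 1) - v (i)` on `ℤ/p`, and a vector is
circular exactly when `v (s - x) = -v x` for some `s` ("odd about `s`"; the centre is `s / 2`,
which exists because `p` is odd). One difference step turns a function that is odd about `s` into
one that is even about `s - 1`, and vice versa, so after the even number `p - 1` of steps `Δ^(p-1) v`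
is odd about `s - (p - 1) = s + 1`: it is circular again. Modulo `p`, `C(p-1, k) ≡ (-1)^k`, so
`Δ^(p-1) v (i) ≡ ∑ₓ v x`, and the sum of a function that is odd about a point vanishes.
-/

/-- A vector `v ∈ ℤ^p` (indexed by `Fin p`) is *circular* if there is an index `i`
with `v i = 0` and `v (i + j) = - v (i - j)` for all `j` with `1 ≤ j ≤ (p-1)/2`,
indices taken modulo `p`. -/
def Circular {p : ℕ} (v : Fin p → ℤ) : Prop :=
  ∃ i : Fin p, v i = 0 ∧
    ∀ j : Fin p, 1 ≤ (j : ℕ) → (j : ℕ) ≤ (p - 1) / 2 → v (i + j) = -v (i - j)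

open Finset

theorem Nat.Prime.cast_choose_pred_eq_neg_one_pow {R : Type*} [Ring R] {p k : ℕ} (hp : p.Prime)
    [CharP R p] (hk : k < p) : ((p - 1).choose k : R) = (-1) ^ k := by
  induction k with
  | zero => simp
  | succ k ih =>
    have hpascal : p.choose (k + 1) = (p - 1).choose k + (p - 1).choose (k + 1) := by
      rw [← Nat.choose_succ_succ', Nat.sub_add_cancel hp.one_le]
    have hzero : (p.choose (k + 1) : R) = 0 :=
      (CharP.cast_eq_zero_iff R p _).2 (hp.dvd_choose_self k.succ_ne_zero hk)
    rw [hpascal, Nat.cast_add, ih (by omega)] at hzero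
    rw [pow_succ, mul_neg_one, eq_neg_of_add_eq_zero_right hzero]

section Reflection

variable {G R : Type*} [AddCommGroup G] [Ring R]

theorem fwdDiff_reflect {f : G → R} {s : G} {ε : R} (h : G) (hf : ∀ x, f (s - x) = ε * f x)
    (x : G) : fwdDiff h f (s - h - x) = -ε * fwdDiff h f x := by
  rw [fwdDiff, fwdDiff, show s - h - x + h = s - x by abel, show s - h - x = s - (x + h) by abel,
    hf, hf]
  noncomm_ring

theorem fwdDiff_iter_reflect {f : G → R} {s : G} {ε : R} (h : G) (hf : ∀ x, f (s - x) = ε * f x)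
    (n : ℕ) (x : G) : (fwdDiff h)^[n] f (s - n • h - x) = (-1) ^ n * ε * (fwdDiff h)^[n] f x := by
  induction n generalizing x with
  | zero => simp [hf]
  | succ n ih =>
    rw [Function.iterate_succ_apply', succ_nsmul, ← sub_sub,
      fwdDiff_reflect h ih, pow_succ]
    noncomm_ring

theorem fwdDiff_iter_card_pred_reflect [Fintype G] (hG : Odd (Fintype.card G)) {f : G → R}
    {s : G} (h : G) (hf : ∀ x, f (s - x) = -f x) (x : G) :
    (fwdDiff h)^[Fintype.card G - 1] f (s + h - x) = -(fwdDiff h)^[Fintype.card G - 1] f x := by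
  have hshift : s + h = s - (Fintype.card G - 1) • h := by
    rw [eq_sub_iff_add_eq, add_assoc, ← succ_nsmul', Nat.sub_add_cancel hG.pos, card_nsmul_eq_zero,
      add_zero]
  rw [hshift, fwdDiff_iter_reflect h (ε := -1) (by simpa using hf),
    (Nat.Odd.sub_odd hG odd_one).neg_one_pow, one_mul, neg_one_mul]

end Reflection

theorem sum_eq_zero_of_reflect {G M : Type*} [AddCommGroup G] [Fintype G] [AddCommGroup M]
    [IsAddTorsionFree M] {f : G → M} {s : G} (hf : ∀ x, f (s - x) = -f x) : ∑ x, f x = 0 := by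
  refine self_eq_neg.1 ?_
  calc ∑ x, f x = ∑ x, f (Equiv.subLeft s x) := (Equiv.sum_comp _ f).symm
    _ = -∑ x, f x := by simp [hf]

section Cyclic

variable {p : ℕ} [NeZero p]

theorem mulVec_eq_fwdDiff {R : Type*} [Ring R] (hp : 1 < p) {A : Matrix (Fin p) (Fin p) R}
    (hA : ∀ i j : Fin p, A i j = if j = i then -1 else if j = i + 1 then 1 else 0)
    (w : Fin p → R) : A.mulVec w = fwdDiff 1 w := by
  ext i
  have hne : i + 1 ≠ i := by
    rw [Ne, add_eq_left, Fin.ext_iff, Fin.val_one', Nat.mod_eq_of_lt hp]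
    exact one_ne_zero
  simp only [Matrix.mulVec, dotProduct, hA, ite_mul, neg_one_mul, one_mul, zero_mul, fwdDiff]
  rw [Fintype.sum_eq_add i (i + 1) hne.symm (fun x hx => by simp [hx.1, hx.2])]
  simp [hne, neg_add_eq_sub]

theorem pow_mulVec_eq_fwdDiff_iter {R : Type*} [Ring R] (hp : 1 < p)
    {A : Matrix (Fin p) (Fin p) R}
    (hA : ∀ i j : Fin p, A i j = if j = i then -1 else if j = i + 1 then 1 else 0)
    (w : Fin p → R) (n : ℕ) : (A ^ n).mulVec w = (fwdDiff 1)^[n] w := by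
  induction n with
  | zero => simp
  | succ n ih =>
    rw [pow_succ', ← Matrix.mulVec_mulVec, ih, mulVec_eq_fwdDiff hp hA,
      Function.iterate_succ_apply']

open Fin.CommRing in
theorem sum_range_add_nsmul_one {M : Type*} [AddCommMonoid M] (f : Fin p → M) (i : Fin p) :
    ∑ k ∈ range p, f (i + k • 1) = ∑ x, f x := by
  rw [← Fin.sum_univ_eq_sum_range (fun k => f (i + k • 1))]
  simp only [Nat.smul_one_eq_cast, Fin.cast_val_eq_self]
  exact Equiv.sum_comp (Equiv.addLeft i) f

theorem intCast_fwdDiff_iter_pred (hp : p.Prime) (f : Fin p → ℤ) (i : Fin p) :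
    (((fwdDiff 1)^[p - 1] f i : ℤ) : ZMod p) = (-1) ^ (p - 1) * ∑ x, (f x : ZMod p) := by
  have := Fact.mk hp
  rw [fwdDiff_iter_eq_sum_shift, Nat.sub_add_cancel hp.one_le]
  simp only [smul_eq_mul]
  push_cast
  rw [← sum_range_add_nsmul_one _ i, Finset.mul_sum]
  refine Finset.sum_congr rfl fun k hk => ?_
  have hk : k < p := Finset.mem_range.1 hk
  rw [hp.cast_choose_pred_eq_neg_one_pow hk, ← pow_add,
    Nat.sub_add_cancel (Nat.le_sub_one_of_lt hk)]

theorem Circular.exists_reflect {v : Fin p → ℤ} (hp : Odd p) (hv : Circular v) :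
    ∃ s, ∀ x, v (s - x) = -v x := by
  obtain ⟨m, hm⟩ := hp
  obtain ⟨i, hi, hsymm⟩ := hv
  have hfull : ∀ t : Fin p, v (i + t) = -v (i - t) := by
    intro t
    rcases eq_or_ne t 0 with rfl | ht
    · simp [hi]
    have ht : 0 < (t : ℕ) := Nat.pos_of_ne_zero (Fin.val_ne_of_ne ht)
    have htp := t.isLt
    by_cases hle : (t : ℕ) ≤ (p - 1) / 2
    · exact hsymm t ht hle
    · have hneg : ((-t : Fin p) : ℕ) = p - t := by
        rw [Fin.val_neg', Nat.mod_eq_of_lt (by omega)]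
      have := hsymm (-t) (by omega) (by omega)
      rw [← sub_eq_add_neg, sub_neg_eq_add] at this
      rw [this, neg_neg]
  refine ⟨i + i, fun x => ?_⟩
  rw [show i + i - x = i + (i - x) by abel, hfull, sub_sub_cancel]

theorem Circular.of_reflect {v : Fin p → ℤ} (hp : Odd p) {s : Fin p}
    (hs : ∀ x, v (s - x) = -v x) : Circular v := by
  obtain ⟨m, hm⟩ := hp
  set c := (m + 1) • s
  have hps : p • s = 0 := by simpa using card_nsmul_eq_zero (x := s)
  have hc : c + c = s := by
    rw [← add_nsmul, show m + 1 + (m + 1) = p + 1 by omega, succ_nsmul, hps, zero_add]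
  refine ⟨c, self_eq_neg.1 ?_, fun j _ _ => ?_⟩
  · simpa [← hc] using hs c
  · have := hs (c + j)
    rw [← hc, show c + c - (c + j) = c - j by abel] at this
    rw [this, neg_neg]

end Cyclic

/-- For an odd prime `p` and a circular vector `v ∈ ℤ^p`, every entry of
`A_p^(p-1) v` is divisible by `p`, and `A_p^(p-1) v` is again circular. -/
theorem stmt2 (p : ℕ) (hp : p.Prime) (hodd : Odd p) [NeZero p]
    (A : Matrix (Fin p) (Fin p) ℤ)
    (hA : ∀ i j : Fin p, A i j = if j = i then -1 else if j = i + 1 then 1 else 0)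
    (v : Fin p → ℤ) (hv : Circular v) :
    (∀ i : Fin p, (p : ℤ) ∣ ((A ^ (p - 1)).mulVec v) i) ∧
      Circular ((A ^ (p - 1)).mulVec v) := by
  obtain ⟨s, hs⟩ := hv.exists_reflect hodd
  have hcard : Fintype.card (Fin p) = p := Fintype.card_fin p
  rw [pow_mulVec_eq_fwdDiff_iter hp.one_lt hA]
  refine ⟨fun i => ?_, Circular.of_reflect hodd (s := s + 1) ?_⟩
  · rw [← ZMod.intCast_zmod_eq_zero_iff_dvd, intCast_fwdDiff_iter_pred hp, ← Int.cast_sum,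
      sum_eq_zero_of_reflect hs, Int.cast_zero, mul_zero]
  · simpa [hcard] using fwdDiff_iter_card_pred_reflect (by rwa [hcard]) 1 hs
end

section
/- Let A be an abelian group, let k, n ≥ 0, and let f : ℤ^n → A be a polynomial map of degree at most k. Then there exist elements a_𝐢 ∈ A indexed by tuples 𝐢 = (i_1,…,i_n) ∈ ℕ^n with i_1 + ⋯ + i_n ≤ k such that f(m_1,…,m_n) = Σ_{|𝐢| ≤ k} a_𝐢 · C(m_1,i_1)⋯C(m_n,i_n) for all (m_1,…,m_n) ∈ ℤ^n. -/
/-- The additive discrete derivative `Δ_h f (x) = f (x + h) - f x`. -/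
def addDeriv {G A : Type*} [AddGroup G] [AddCommGroup A] (h : G) (f : G → A) : G → A :=
  fun x => f (x + h) - f x

/-- `f : G → A` is a polynomial map of degree at most `k`: all `(k+1)`-fold
additive derivatives of `f` vanish identically. -/
def IsPolyLE {G A : Type*} [AddGroup G] [AddCommGroup A] : ℕ → (G → A) → Prop
  | 0, f => ∀ h : G, addDeriv h f = 0
  | k + 1, f => ∀ h : G, IsPolyLE k (addDeriv h f)

section Aux

variable {G A : Type*} [AddCommGroup G] [AddCommGroup A]

lemma addDeriv_zero_fun (h : G) : addDeriv h (0 : G → A) = 0 := by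
  funext x; simp [addDeriv]

lemma addDeriv_comp {G' : Type*} [AddCommGroup G'] (φ : G' →+ G) (h : G') (f : G → A) :
    addDeriv h (f ∘ φ) = (addDeriv (φ h) f) ∘ φ := by
  funext x; simp [addDeriv, map_add]

lemma isPolyLE_comp {G' : Type*} [AddCommGroup G'] (φ : G' →+ G) :
    ∀ (k : ℕ) (f : G → A), IsPolyLE k f → IsPolyLE k (f ∘ φ) := by
  intro k
  induction k with
  | zero =>
    intro f hf h
    rw [addDeriv_comp φ h f, hf (φ h)]
    rfl
  | succ k ih =>
    intro f hf h
    rw [addDeriv_comp φ h f]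
    exact ih _ (hf (φ h))

/-- Newton's forward difference formula in one variable. -/
lemma newton1 {B : Type*} [AddCommGroup B] : ∀ (k : ℕ) (g : ℤ → B), IsPolyLE k g →
    ∀ m : ℤ, g m = ∑ i ∈ Finset.range (k + 1),
      Ring.choose m i • ((addDeriv (1 : ℤ))^[i] g 0) := by
  intro k
  induction k with
  | zero =>
    intro g hg m
    have h0 : g m = g 0 := by
      have := congrFun (hg m) 0
      simp only [addDeriv, Pi.zero_apply, zero_add, sub_eq_zero] at this
      exact this
    simp [h0]
  | succ k ih =>
    intro g hg m
    set c : ℕ → B := fun i => (addDeriv (1 : ℤ))^[i] g 0 with hc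
    set S : ℤ → B := fun t => ∑ i ∈ Finset.range (k + 2), Ring.choose t i • c i with hS
    have hstep : ∀ t : ℤ, S (t + 1) = S t + (g (t + 1) - g t) := by
      intro t
      have h2 := ih (addDeriv 1 g) (hg 1) t
      have h2' : addDeriv (1 : ℤ) g t = ∑ i ∈ Finset.range (k + 1), Ring.choose t i • c (i + 1) := by
        rw [h2]
        refine Finset.sum_congr rfl fun i _ => ?_
        rw [hc]
        rw [← Function.iterate_succ_apply]
      have h3 : S (t + 1) - S t = ∑ i ∈ Finset.range (k + 1), Ring.choose t i • c (i + 1) := by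
        rw [hS]
        simp only
        rw [← Finset.sum_sub_distrib]
        have : ∀ i ∈ Finset.range (k + 2),
            Ring.choose (t + 1) i • c i - Ring.choose t i • c i
              = (Ring.choose (t + 1) i - Ring.choose t i) • c i := by
          intro i _; rw [sub_smul]
        rw [Finset.sum_congr rfl this]
        rw [Finset.sum_range_succ']
        have hz : (Ring.choose (t + 1) 0 - Ring.choose t 0) • c 0 = 0 := by
          rw [Ring.choose_zero_right, Ring.choose_zero_right, sub_self, zero_smul]
        rw [hz, add_zero]
        refine Finset.sum_congr rfl fun i _ => ?_
        have hp : Ring.choose (t + 1) (i + 1) = Ring.choose t i + Ring.choose t (i + 1) :=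
          Ring.choose_succ_succ t i
        rw [hp, add_sub_cancel_right]
      have h4 : addDeriv (1 : ℤ) g t = g (t + 1) - g t := rfl
      have := h3
      rw [← h2', h4] at this
      rw [← this]
      abel
    have hconst : ∀ t : ℤ, g t - S t = g 0 - S 0 := by
      intro t
      induction t using Int.induction_on with
      | zero => rfl
      | succ n ihn =>
        rw [hstep n, ← ihn]
        abel
      | pred n ihn =>
        have h := hstep (-(n : ℤ) - 1)
        have e : (-(n : ℤ) - 1) + 1 = -n := by ring
        rw [e] at h
        rw [← ihn]
        rw [h]
        abel
    have hS0 : S 0 = g 0 := by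
      rw [hS]
      simp only
      rw [Finset.sum_eq_single 0]
      · simp [hc]
      · intro b _ hb0
        rw [Ring.choose_zero_pos ℤ (Nat.pos_of_ne_zero hb0), zero_smul]
      · intro h; exact absurd (Finset.mem_range.2 (Nat.succ_pos _)) h
    have := hconst m
    rw [hS0, sub_self, sub_eq_zero] at this
    exact this

lemma addDeriv_comm (g h : G) (f : G → A) :
    addDeriv g (addDeriv h f) = addDeriv h (addDeriv g f) := by
  funext x
  simp only [addDeriv]
  rw [add_right_comm x h g]
  abel

lemma isPolyLE_deriv : ∀ (k : ℕ) (f : G → A) (h : G), IsPolyLE k f → IsPolyLE k (addDeriv h f) := by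
  intro k
  induction k with
  | zero =>
    intro f h hf g
    rw [hf h]
    exact addDeriv_zero_fun g
  | succ k ih =>
    intro f h hf g
    rw [addDeriv_comm g h f]
    exact ih _ h (hf g)

lemma isPolyLE_iter_deriv (e : G) : ∀ (i d : ℕ) (f : G → A), IsPolyLE (i + d) f →
    IsPolyLE d ((addDeriv e)^[i] f) := by
  intro i
  induction i with
  | zero => intro d f hf; simpa using hf
  | succ i ih =>
    intro d f hf
    rw [Function.iterate_succ_apply]
    refine ih d (addDeriv e f) ?_
    have : i + 1 + d = (i + d) + 1 := by omega
    rw [this] at hf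
    exact hf e

end Aux

section Curry

variable {A : Type*} [AddCommGroup A] {n : ℕ}

lemma cons_add_cons (t h : ℤ) (m m' : Fin n → ℤ) :
    (Fin.cons t m : Fin (n + 1) → ℤ) + Fin.cons h m' = Fin.cons (t + h) (m + m') := by
  funext j
  refine Fin.cases ?_ ?_ j <;> simp

/-- Currying the first variable. -/
def cur (f : (Fin (n + 1) → ℤ) → A) : ℤ → ((Fin n → ℤ) → A) :=
  fun t m => f (Fin.cons t m)

lemma addDeriv_cur (h : ℤ) (f : (Fin (n + 1) → ℤ) → A) :
    addDeriv h (cur f) = cur (addDeriv (Fin.cons h 0) f) := by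
  funext t m
  simp only [addDeriv, cur, Pi.sub_apply, Pi.add_apply]
  congr 2
  rw [cons_add_cons, add_zero]

lemma isPolyLE_cur : ∀ (k : ℕ) (f : (Fin (n + 1) → ℤ) → A), IsPolyLE k f → IsPolyLE k (cur f) := by
  intro k
  induction k with
  | zero =>
    intro f hf h
    rw [addDeriv_cur, hf (Fin.cons h 0)]
    rfl
  | succ k ih =>
    intro f hf h
    rw [addDeriv_cur]
    exact ih _ (hf (Fin.cons h 0))

lemma iter_addDeriv_cur (f : (Fin (n + 1) → ℤ) → A) : ∀ i : ℕ,
    (addDeriv (1 : ℤ))^[i] (cur f) = cur ((addDeriv (Fin.cons 1 0))^[i] f) := by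
  intro i
  induction i with
  | zero => rfl
  | succ i ih =>
    rw [Function.iterate_succ_apply', ih, addDeriv_cur, Function.iterate_succ_apply']

/-- The additive hom `m ↦ Fin.cons 0 m`. -/
def consZeroHom (n : ℕ) : (Fin n → ℤ) →+ (Fin (n + 1) → ℤ) where
  toFun m := Fin.cons 0 m
  map_zero' := by
    funext j
    refine Fin.cases ?_ ?_ j <;> simp
  map_add' m m' := by
    rw [cons_add_cons, add_zero]

end Curry

section Main

variable {A : Type*} [AddCommGroup A]

lemma aux_main : ∀ (n k : ℕ) (f : (Fin n → ℤ) → A), IsPolyLE k f →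
    ∃ a : (Fin n → ℕ) → A, (∀ i, k < ∑ j, i j → a i = 0) ∧
      ∀ m : Fin n → ℤ, f m = ∑ i ∈ Fintype.piFinset (fun _ : Fin n => Finset.range (k + 1)),
        (∏ j, Ring.choose (m j) (i j)) • a i := by
  intro n
  induction n with
  | zero =>
    intro k f _
    refine ⟨fun _ => f (fun j => j.elim0), fun i hi => ?_, fun m => ?_⟩
    · simp at hi
    · rw [Finset.sum_eq_single_of_mem (fun _ => 0)]
      · simp only [Finset.univ_eq_empty, Finset.prod_empty, one_smul]
        congr 1
        exact Subsingleton.elim _ _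
      · exact Fintype.mem_piFinset.2 fun j => j.elim0
      · intro b _ hb
        exact absurd (Subsingleton.elim b (fun _ => 0)) hb
  | succ n ih =>
    intro k f hf
    -- coefficients of the Newton expansion in the first variable
    set G : ℕ → ((Fin n → ℤ) → A) := fun i0 => (addDeriv (1 : ℤ))^[i0] (cur f) 0 with hG
    have hGpoly : ∀ i0 : ℕ, i0 ≤ k → IsPolyLE (k - i0) (G i0) := by
      intro i0 hi0
      have h1 : G i0 = ((addDeriv (Fin.cons 1 0))^[i0] f) ∘ (consZeroHom n) := by
        rw [hG]
        simp only
        rw [iter_addDeriv_cur]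
        rfl
      rw [h1]
      refine isPolyLE_comp _ _ _ (isPolyLE_iter_deriv _ i0 (k - i0) f ?_)
      have : i0 + (k - i0) = k := by omega
      rw [this]
      exact hf
    have hEx : ∀ i0 : ℕ, ∃ b : (Fin n → ℕ) → A, i0 ≤ k →
        ((∀ j, k - i0 < ∑ l, j l → b j = 0) ∧
          ∀ m : Fin n → ℤ, G i0 m = ∑ j ∈ Fintype.piFinset
              (fun _ : Fin n => Finset.range (k - i0 + 1)),
            (∏ l, Ring.choose (m l) (j l)) • b j) := by
      intro i0
      by_cases hi0 : i0 ≤ k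
      · obtain ⟨b, hb1, hb2⟩ := ih (k - i0) (G i0) (hGpoly i0 hi0)
        exact ⟨b, fun _ => ⟨hb1, hb2⟩⟩
      · exact ⟨fun _ => 0, fun h => absurd h hi0⟩
    choose b hb using hEx
    -- extended expansion of G i0 over the full box
    have hGbox : ∀ i0 : ℕ, i0 ≤ k → ∀ m : Fin n → ℤ,
        G i0 m = ∑ j ∈ Fintype.piFinset (fun _ : Fin n => Finset.range (k + 1)),
          (∏ l, Ring.choose (m l) (j l)) • b i0 j := by
      intro i0 hi0 m
      rw [(hb i0 hi0).2 m]
      refine Finset.sum_subset ?_ ?_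
      · exact Fintype.piFinset_subset _ _ fun l => Finset.range_subset_range.2 (by omega)
      · intro j hj hj'
        have : ∃ l, ¬ j l ∈ Finset.range (k - i0 + 1) := by
          by_contra hcon
          push_neg at hcon
          exact hj' (Fintype.mem_piFinset.2 hcon)
        obtain ⟨l, hl⟩ := this
        rw [Finset.mem_range, not_lt] at hl
        have hsum : k - i0 < ∑ l', j l' := by
          calc k - i0 < k - i0 + 1 := by omega
          _ ≤ j l := hl
          _ ≤ ∑ l', j l' := Finset.single_le_sum (fun _ _ => Nat.zero_le _) (Finset.mem_univ l)
        rw [(hb i0 hi0).1 j hsum, smul_zero]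
    -- the assembled coefficients
    refine ⟨fun i => if i 0 ≤ k then b (i 0) (Fin.tail i) else 0, ?_, ?_⟩
    · intro i hi
      show (if i 0 ≤ k then b (i 0) (Fin.tail i) else 0) = 0
      by_cases h0 : i 0 ≤ k
      · rw [if_pos h0]
        refine (hb (i 0) h0).1 (Fin.tail i) ?_
        have := Fin.sum_univ_succ i
        simp only [Fin.tail] at *
        omega
      · rw [if_neg h0]
    · intro m
      -- Newton in the first variable
      have hcur : cur f (m 0) = ∑ i0 ∈ Finset.range (k + 1), Ring.choose (m 0) i0 • G i0 :=
        newton1 k (cur f) (isPolyLE_cur k f hf) (m 0)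
      have hfm : f m = cur f (m 0) (Fin.tail m) := by
        rw [cur, Fin.cons_self_tail]
      rw [hfm, hcur]
      rw [Finset.sum_apply]
      have step1 : ∀ i0 ∈ Finset.range (k + 1),
          (Ring.choose (m 0) i0 • G i0) (Fin.tail m)
            = ∑ j ∈ Fintype.piFinset (fun _ : Fin n => Finset.range (k + 1)),
              (Ring.choose (m 0) i0 * ∏ l, Ring.choose (m l.succ) (j l)) • b i0 j := by
        intro i0 hi0
        rw [Finset.mem_range] at hi0
        rw [Pi.smul_apply, hGbox i0 (by omega) (Fin.tail m), Finset.smul_sum]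
        refine Finset.sum_congr rfl fun j _ => ?_
        rw [smul_smul]
        rfl
      rw [Finset.sum_congr rfl step1]
      rw [← Finset.sum_product']
      refine Finset.sum_bij' (fun p _ => Fin.cons p.1 p.2)
        (fun i _ => (i 0, Fin.tail i)) ?_ ?_ ?_ ?_ ?_
      · intro p hp
        rw [Finset.mem_product] at hp
        refine Fintype.mem_piFinset.2 fun j => ?_
        refine Fin.cases ?_ ?_ j
        · simpa using hp.1
        · intro l
          simpa using Fintype.mem_piFinset.1 hp.2 l
      · intro i hi
        rw [Finset.mem_product]
        constructor
        · exact Fintype.mem_piFinset.1 hi 0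
        · exact Fintype.mem_piFinset.2 fun l => Fintype.mem_piFinset.1 hi l.succ
      · intro p hp
        simp [Fin.tail_cons]
      · intro i hi
        exact Fin.cons_self_tail i
      · intro p hp
        rw [Finset.mem_product] at hp
        have h0 : (Fin.cons p.1 p.2 : Fin (n + 1) → ℕ) 0 ≤ k := by
          have := Finset.mem_range.1 hp.1
          simp only [Fin.cons_zero]
          omega
        show _ = _ • (if _ then _ else _)
        rw [if_pos h0]
        simp only [Fin.cons_zero, Fin.tail_cons]
        congr 1
        rw [Fin.prod_univ_succ]
        simp only [Fin.cons_zero, Fin.cons_succ]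

end Main

/-- Every polynomial map `f : ℤ^n → A` of degree at most `k` has an expansion
`f m = Σ_{|𝐢| ≤ k} C(m₁, i₁) ⋯ C(mₙ, iₙ) • a_𝐢` with coefficients `a_𝐢 ∈ A`,
where `C(m, i) = Ring.choose m i` is the binomial coefficient of the integer `m`. -/
theorem stmt6 {A : Type*} [AddCommGroup A] (k n : ℕ)
    (f : (Fin n → ℤ) → A) (hf : IsPolyLE k f) :
    ∃ a : (Fin n → Fin (k + 1)) → A, ∀ m : Fin n → ℤ,
      f m = ∑ i ∈ Finset.univ.filter (fun i : Fin n → Fin (k + 1) => ∑ j, (i j : ℕ) ≤ k),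
        (∏ j, Ring.choose (m j) ((i j : ℕ))) • a i := by
  obtain ⟨a, ha0, ha⟩ := aux_main n k f hf
  refine ⟨fun i => a (fun j => (i j : ℕ)), fun m => ?_⟩
  rw [ha m]
  have huniv : ∑ i ∈ Fintype.piFinset (fun _ : Fin n => Finset.range (k + 1)),
      (∏ j, Ring.choose (m j) (i j)) • a i
        = ∑ i : Fin n → Fin (k + 1),
            (∏ j, Ring.choose (m j) ((i j : ℕ))) • a (fun j => (i j : ℕ)) := by
    refine Finset.sum_bij'
      (fun x hx => fun j => (⟨x j, by
        simpa [Finset.mem_range] using Fintype.mem_piFinset.1 hx j⟩ : Fin (k + 1)))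
      (fun y _ => fun j => (y j : ℕ)) ?_ ?_ ?_ ?_ ?_
    · intro x hx; exact Finset.mem_univ _
    · intro y _
      exact Fintype.mem_piFinset.2 fun j => Finset.mem_range.2 (y j).is_lt
    · intro x hx; rfl
    · intro y _; rfl
    · intro x hx; rfl
  rw [huniv]
  exact (Finset.sum_filter_of_ne fun i _ hne => by
    by_contra hgt
    push_neg at hgt
    rw [ha0 _ hgt, smul_zero] at hne
    exact hne rfl).symm
end

section
/- Let p be a prime, A an abelian group, and k, n ≥ 0 integers. Let P : 𝔽_p^n → A be a polynomial map of degree at most k. Identify 𝔽_p^n with [0,p−1]^n ⊂ ℤ^n in the standard way, and suppose that P(z) = 0 for all z ∈ [0,p−1]^n with z_1 + ⋯ + z_n ≤ k. Then P is identically zero. -/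
lemma constant_of_single {p n : ℕ} [NeZero p] {A : Type*} [AddCommGroup A]
    (P : (Fin n → ZMod p) → A)
    (h1 : ∀ (i : Fin n) (x : Fin n → ZMod p), P (x + Pi.single i 1) = P x) :
    ∀ z, P z = P 0 := by
  have hm : ∀ (m : ℕ) (i : Fin n) (x), P (x + Pi.single i (m : ZMod p)) = P x := by
    intro m
    induction m with
    | zero => intro i x; simp
    | succ m ih =>
      intro i x
      have hsingle : (Pi.single i ((m + 1 : ℕ) : ZMod p) : Fin n → ZMod p)
          = Pi.single i (m : ZMod p) + Pi.single i 1 := by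
        rw [← Pi.single_add]; push_cast; ring_nf
      rw [hsingle, ← add_assoc, h1, ih]
  have hc : ∀ (c : ZMod p) (i : Fin n) (x), P (x + Pi.single i c) = P x := by
    intro c i x
    obtain ⟨m, rfl⟩ := ZMod.natCast_zmod_surjective c
    exact hm m i x
  have hs : ∀ (s : Finset (Fin n)) (z : Fin n → ZMod p) (x),
      P (x + ∑ i ∈ s, Pi.single i (z i)) = P x := by
    intro s
    induction s using Finset.induction with
    | empty => simp
    | @insert a s hnot ih =>
      intro z x
      rw [Finset.sum_insert hnot, ← add_assoc, ih, hc]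
  intro z
  have hz : z = ∑ i, Pi.single i (z i) := (Finset.univ_sum_single z).symm
  calc P z = P (0 + ∑ i, Pi.single i (z i)) := by rw [← hz, zero_add]
    _ = P 0 := hs _ _ _

lemma main_vanish (p : ℕ) (hp : p.Prime) {A : Type*} [AddCommGroup A] :
    ∀ (k : ℕ) {n : ℕ} (P : (Fin n → ZMod p) → A), IsPolyLE k P →
      (∀ z, (∑ i, (z i).val) ≤ k → P z = 0) → ∀ z, P z = 0 := by
  haveI : NeZero p := ⟨hp.pos.ne'⟩
  haveI : Fact (1 < p) := ⟨hp.one_lt⟩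
  intro k
  induction k with
  | zero =>
    intro n P hP hz z
    have h0 : P 0 = 0 := hz 0 (by simp)
    have := congrFun (hP z) 0
    simp only [addDeriv, zero_add, Pi.zero_apply, sub_eq_zero] at this
    rw [this, h0]
  | succ k ih =>
    intro n P hP hz
    have key : ∀ (i : Fin n) (x), P (x + Pi.single i 1) = P x := by
      intro i
      have hQ : IsPolyLE k (addDeriv (Pi.single i 1) P) := hP _
      have hQz : ∀ z, (∑ j, (z j).val) ≤ k → addDeriv (Pi.single i 1) P z = 0 := by
        intro z hzk
        have h1 : P z = 0 := hz z (hzk.trans (Nat.le_succ k))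
        have h2 : P (z + Pi.single i 1) = 0 := by
          apply hz
          have hb : ∀ j, ((z + (Pi.single i 1 : Fin n → ZMod p)) j).val
              ≤ (z j).val + ((Pi.single i 1 : Fin n → ZMod p) j).val := by
            intro j
            simpa using ZMod.val_add_le (z j) ((Pi.single i 1 : Fin n → ZMod p) j)
          have hsum1 : ∑ j, ((Pi.single i 1 : Fin n → ZMod p) j).val = 1 := by
            rw [Finset.sum_eq_single i]
            · simp [ZMod.val_one]
            · intro b _ hbne; simp [Pi.single_eq_of_ne hbne]
            · simp
          calc ∑ j, ((z + (Pi.single i 1 : Fin n → ZMod p)) j).val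
              ≤ ∑ j, ((z j).val + ((Pi.single i 1 : Fin n → ZMod p) j).val) :=
                Finset.sum_le_sum fun j _ => hb j
            _ = (∑ j, (z j).val) + ∑ j, ((Pi.single i 1 : Fin n → ZMod p) j).val :=
                Finset.sum_add_distrib
            _ ≤ k + 1 := by omega
        simp [addDeriv, h1, h2]
      intro x
      have h := ih _ hQ hQz x
      simpa [addDeriv, sub_eq_zero] using h
    intro z
    rw [constant_of_single P key z]
    exact hz 0 (by simp)

/-- A polynomial map `P : 𝔽_p^n → A` of degree ≤ k that vanishes at all points whose
standard representative in `{0,…,p-1}^n` has height (coordinate sum) at most `k`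
is identically zero. -/
theorem stmt7 (p : ℕ) (hp : p.Prime) {A : Type*} [AddCommGroup A] (k n : ℕ)
    (P : (Fin n → ZMod p) → A) (hP : IsPolyLE k P)
    (hz : ∀ z : Fin n → ZMod p, (∑ i, (z i).val) ≤ k → P z = 0) :
    ∀ z : Fin n → ZMod p, P z = 0 :=
  main_vanish p hp k P hP hz
end

section
/- Let p be a prime, k ≥ 1, and let G be a finite cyclic group with a p-homogeneous filtration (G_i)_{i≥0} of degree exactly k such that every quotient G_i/G_{i+1} is either trivial or cyclic of order p. Let Δ = { i ∈ {1,…,k} : G_i/G_{i+1} ≅ ℤ/pℤ }. Then Δ is (p−1)-separated: any two distinct elements a, b ∈ Δ satisfy |a − b| ≥ p−1. -/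
open AddSubgroup

/-- In a finite cyclic additive group, an element whose order divides the cardinality of a
subgroup belongs to that subgroup. -/
lemma mem_of_addOrderOf_dvd_card {G : Type*} [AddCommGroup G] [Fintype G]
    (hcyc : IsAddCyclic G) {K : AddSubgroup G} {x : G}
    (hdvd : addOrderOf x ∣ Nat.card K) : x ∈ K := by
  classical
  set m := Nat.card K with hm
  have hm0 : 0 < m := Nat.card_pos
  -- the m-torsion subgroup
  let S : AddSubgroup G :=
    { carrier := {y : G | m • y = 0}
      zero_mem' := by simp
      add_mem' := fun {a b} ha hb => by
        simp only [Set.mem_setOf_eq] at *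
        rw [smul_add, ha, hb, add_zero]
      neg_mem' := fun {a} ha => by
        simp only [Set.mem_setOf_eq] at *
        rw [smul_neg, ha, neg_zero] }
  have hxS : x ∈ S := by
    show m • x = 0
    exact addOrderOf_dvd_iff_nsmul_eq_zero.mp hdvd
  have hKS : (K : Set G) ⊆ (S : Set G) := by
    intro y hy
    show m • y = 0
    have : m • (⟨y, hy⟩ : K) = 0 := by
      have h2 : addOrderOf (⟨y, hy⟩ : K) ∣ m := addOrderOf_dvd_natCard _
      exact addOrderOf_dvd_iff_nsmul_eq_zero.mp h2
    exact congrArg (AddSubgroup.subtype K) this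
  have hcard : Nat.card S ≤ m := by
    have h1 := IsAddCyclic.card_nsmul_eq_zero_le (α := G) (n := m) hm0
    have h2 : Nat.card S = (Finset.filter (fun a : G => m • a = 0) Finset.univ).card := by
      rw [Nat.card_eq_fintype_card]
      exact Fintype.card_subtype (fun a : G => m • a = 0)
    rw [h2]
    convert h1 using 2
  have heq : (K : Set G) = (S : Set G) := by
    apply Set.eq_of_subset_of_ncard_le hKS
    rw [← Nat.card_coe_set_eq, ← Nat.card_coe_set_eq]
    exact hcard
  rw [show (x ∈ K) = (x ∈ (K : Set G)) from rfl, heq]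
  exact hxS


/-- Let `G` be a finite cyclic group with a `p`-homogeneous filtration of degree exactly
`k` whose successive quotients `G_i/G_{i+1}` are trivial or cyclic of order `p`
(equivalently, `|G_i| = p·|G_{i+1}|`).  Then the set
`Δ = {i ∈ [1,k] : G_i/G_{i+1} ≅ ℤ/pℤ}` is `(p-1)`-separated: distinct `a, b ∈ Δ`
satisfy `|a - b| ≥ p - 1`. -/
theorem stmt11 (p k : ℕ) (hp : p.Prime) (hk : 1 ≤ k)
    {G : Type*} [AddCommGroup G] [Fintype G] (hcyc : IsAddCyclic G)
    (Gs : ℕ → AddSubgroup G) (h0 : Gs 0 = ⊤) (h1 : Gs 1 = ⊤)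
    (hmono : ∀ i, Gs (i + 1) ≤ Gs i)
    (hhom : ∀ i, ∀ x ∈ Gs i, p • x ∈ Gs (i + p - 1))
    (hdegk : Gs k ≠ ⊥) (hdegk1 : Gs (k + 1) = ⊥)
    (hquot : ∀ i, Gs (i + 1) = Gs i ∨ Nat.card (Gs i) = p * Nat.card (Gs (i + 1))) :
    ∀ a b : ℕ, 1 ≤ a → a ≤ k → 1 ≤ b → b ≤ k →
      Nat.card (Gs a) = p * Nat.card (Gs (a + 1)) →
      Nat.card (Gs b) = p * Nat.card (Gs (b + 1)) →
      a ≠ b → (p : ℤ) - 1 ≤ |(a : ℤ) - (b : ℤ)| := by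
  have hanti : Antitone Gs := antitone_nat_of_succ_le hmono
  have hp2 : 2 ≤ p := hp.two_le
  have key : ∀ a b : ℕ, 1 ≤ a → a < b →
      Nat.card (Gs a) = p * Nat.card (Gs (a + 1)) →
      Nat.card (Gs b) = p * Nat.card (Gs (b + 1)) →
      (p : ℤ) - 1 ≤ (b : ℤ) - (a : ℤ) := by
    intro a b ha hab hca hcb
    by_contra hcon
    push_neg at hcon
    have hble : b + 1 ≤ a + p - 1 := by omega
    have hne : Gs (a + 1) ≠ Gs a := by
      intro h
      rw [h] at hca
      have hpos : 0 < Nat.card (Gs a) := Nat.card_pos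
      nlinarith
    have hlt : Gs (a + 1) < Gs a := lt_of_le_of_ne (hmono a) hne
    obtain ⟨x, hxa, hxa1⟩ := SetLike.exists_of_lt hlt
    have hpx : p • x ∈ Gs (b + 1) := hanti hble (hhom a x hxa)
    have hdvd1 : addOrderOf (p • x) ∣ Nat.card (Gs (b + 1)) := by
      rw [← Nat.card_zmultiples]
      exact AddSubgroup.card_dvd_of_le (AddSubgroup.zmultiples_le.mpr hpx)
    have hopx : addOrderOf (p • x) = addOrderOf x / Nat.gcd (addOrderOf x) p :=
      addOrderOf_nsmul x
    have hBA : Nat.card (Gs b) ∣ Nat.card (Gs (a + 1)) :=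
      AddSubgroup.card_dvd_of_le (hanti (by omega : a + 1 ≤ b))
    have hodvd : addOrderOf x ∣ Nat.card (Gs (a + 1)) := by
      rcases (Nat.coprime_or_dvd_of_prime hp (addOrderOf x)) with hco | hpd
      · have h1 : addOrderOf (p • x) = addOrderOf x := by
          rw [hopx, Nat.Coprime.gcd_eq_one hco.symm, Nat.div_one]
        have h2 : Nat.card (Gs (b + 1)) ∣ Nat.card (Gs b) :=
          AddSubgroup.card_dvd_of_le (hmono b)
        exact (h1 ▸ hdvd1).trans (h2.trans hBA)
      · have h1 : addOrderOf (p • x) = addOrderOf x / p := by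
          rw [hopx, Nat.gcd_eq_right hpd]
        have h3 : addOrderOf x = p * (addOrderOf x / p) := (Nat.mul_div_cancel' hpd).symm
        have h4 : p * (addOrderOf x / p) ∣ p * Nat.card (Gs (b + 1)) :=
          mul_dvd_mul_left p (h1 ▸ hdvd1)
        rw [h3]
        exact (h4.trans (hcb ▸ dvd_refl _)).trans hBA
    exact hxa1 (mem_of_addOrderOf_dvd_card hcyc hodvd)
  intro a b ha hak hb hbk hca hcb hne
  rcases Nat.lt_or_ge a b with h | h
  · have h1 := key a b ha h hca hcb
    have habs : |(a : ℤ) - (b : ℤ)| = (b : ℤ) - a := by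
      rw [abs_sub_comm]; exact abs_of_nonneg (by push_cast; omega)
    rw [habs]; exact h1
  · have hba : b < a := lt_of_le_of_ne h (Ne.symm hne)
    have h1 := key b a hb hba hcb hca
    have habs : |(a : ℤ) - (b : ℤ)| = (a : ℤ) - b := abs_of_nonneg (by push_cast; omega)
    rw [habs]; exact h1
end

section
/- Let X and Y be nonempty finite sets and let f : X × Y → ℂ be a function with |f(x,y)| ≤ 1 for all (x,y) and with Σ_{x ∈ X, y ∈ Y} f(x,y) = 0. Then there exist finitely many pairs of functions u_r : X → ℂ and v_r : Y → ℂ, each bounded in absolute value by 1, such that f(x,y) = Σ_r u_r(x) v_r(y) for all (x,y), and for every r at least one of u_r, v_r has average zero (i.e. Σ_{x} u_r(x) = 0 or Σ_{y} v_r(y) = 0). -/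
/-- A 1-bounded function `f : X × Y → ℂ` on a product of nonempty finite sets with total
sum zero can be written as a finite sum of rank-one functions `u_r(x) v_r(y)` with all
`u_r, v_r` 1-bounded and, for each `r`, at least one of `u_r, v_r` of average zero. -/
theorem stmt14 {X Y : Type*} [Fintype X] [Fintype Y] [Nonempty X] [Nonempty Y]
    (f : X × Y → ℂ) (hbd : ∀ z : X × Y, ‖f z‖ ≤ 1)
    (hsum : ∑ x : X, ∑ y : Y, f (x, y) = 0) :
    ∃ (R : ℕ) (u : Fin R → X → ℂ) (v : Fin R → Y → ℂ),
      (∀ r x, ‖u r x‖ ≤ 1) ∧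
      (∀ r y, ‖v r y‖ ≤ 1) ∧
      (∀ x y, f (x, y) = ∑ r, u r x * v r y) ∧
      (∀ r, (∑ x, u r x = 0) ∨ (∑ y, v r y = 0)) := by
  classical
  have hYpos : (0 : ℝ) < Fintype.card Y := by
    exact_mod_cast Fintype.card_pos
  have hY : (Fintype.card Y : ℂ) ≠ 0 := by
    exact_mod_cast Nat.cast_ne_zero.mpr Fintype.card_ne_zero
  set g : X → ℂ := fun x => (Fintype.card Y : ℂ)⁻¹ * ∑ y, f (x, y) with hg
  have hgbd : ∀ x, ‖g x‖ ≤ 1 := by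
    intro x
    have h1 : ‖∑ y, f (x, y)‖ ≤ Fintype.card Y := by
      calc ‖∑ y, f (x, y)‖ ≤ ∑ y : Y, ‖f (x, y)‖ :=
            norm_sum_le _ _
        _ ≤ ∑ y : Y, 1 := Finset.sum_le_sum fun y _ => hbd (x, y)
        _ = Fintype.card Y := by simp
    have : ‖g x‖ = (Fintype.card Y : ℝ)⁻¹ * ‖∑ y, f (x, y)‖ := by
      simp [hg, norm_mul, norm_inv]
    rw [this]
    rw [inv_mul_le_iff₀ hYpos, mul_one]
    exact h1
  have hgsum : ∀ x, ∑ y, f (x, y) = (Fintype.card Y : ℂ) * g x := by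
    intro x
    rw [hg]
    field_simp
  let ι := (X ⊕ X) ⊕ Unit
  let U : ι → X → ℂ := fun i => match i with
    | .inl (.inl x') => fun x => if x = x' then 1 else 0
    | .inl (.inr x') => fun x => if x = x' then 1 else 0
    | .inr _ => g
  let V : ι → Y → ℂ := fun i => match i with
    | .inl (.inl x') => fun y => (f (x', y) - g x') / 2
    | .inl (.inr x') => fun y => (f (x', y) - g x') / 2
    | .inr _ => fun _ => 1
  have hVbd : ∀ x' y, ‖(f (x', y) - g x') / 2‖ ≤ 1 := by
    intro x' y
    rw [norm_div]
    have : ‖f (x', y) - g x'‖ ≤ 2 := by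
      calc ‖f (x', y) - g x'‖ ≤ ‖f (x', y)‖ + ‖g x'‖ :=
            norm_sub_le _ _
        _ ≤ 1 + 1 := add_le_add (hbd (x', y)) (hgbd x')
        _ = 2 := by norm_num
    simpa using div_le_one_of_le₀ (by simpa using this) (by norm_num)
  have hVzero : ∀ x', ∑ y, (f (x', y) - g x') / 2 = 0 := by
    intro x'
    rw [← Finset.sum_div, Finset.sum_sub_distrib]
    simp [hgsum x']
  let e := (Fintype.equivFin ι).symm
  refine ⟨Fintype.card ι, fun r => U (e r), fun r => V (e r), ?_, ?_, ?_, ?_⟩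
  · intro r x
    rcases he : e r with (x' | x') | u <;> simp only [he, U]
    · split <;> simp
    · split <;> simp
    · exact hgbd x
  · intro r y
    rcases he : e r with (x' | x') | u <;> simp only [he, V]
    · exact hVbd x' y
    · exact hVbd x' y
    · simp
  · intro x y
    rw [Equiv.sum_comp e (fun i => U i x * V i y)]
    rw [Fintype.sum_sum_type, Fintype.sum_sum_type]
    have hs : ∀ h : X → ℂ, (∑ x' : X, (if x = x' then (1:ℂ) else 0) * h x') = h x := by
      intro h
      simp [ite_mul]
    symm
    simp only [U, V, ite_mul, one_mul, zero_mul, Finset.sum_ite_eq, Finset.mem_univ, if_true,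
      Finset.sum_const, Finset.card_univ, Fintype.card_unit, one_smul]
    ring
  · intro r
    rcases he : e r with (x' | x') | u
    · right; simp only [he, V]; exact hVzero x'
    · right; simp only [he, V]; exact hVzero x'
    · left
      simp only [he, U]
      simp only [hg, ← Finset.mul_sum]
      rw [hsum, mul_zero]
end

section
/- Let p be a prime and n, m ≥ 1. Suppose φ : [0,p−1]^n → [0,p−1]^m is the restriction of an affine homomorphism ℤ^n → ℤ^m (i.e. φ(v) = Tv + c for a ℤ-linear map T and constant c, and φ maps [0,p−1]^n into [0,p−1]^m). Then for each coordinate j ∈ {1,…,m}, the function v ↦ φ_j(v) is either constantly equal to some element of {0,…,p−1}, or equal to v_{i} for some i ∈ {1,…,n}, or equal to p−1−v_{i} for some i ∈ {1,…,n}. -/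
/-- If an affine homomorphism `φ(v) = T v + c : ℤ^n → ℤ^m` maps the box `[0,p-1]^n`
into `[0,p-1]^m`, then on the box each coordinate function `φ_j` is constant (with
value in `{0,…,p-1}`), or equals `v ↦ v_i`, or equals `v ↦ p - 1 - v_i`, for some
`i`. -/
theorem stmt16 (p n m : ℕ) (hp : p.Prime) (hn : 1 ≤ n) (hm : 1 ≤ m)
    (φ : (Fin n → ℤ) → (Fin m → ℤ))
    (T : (Fin n → ℤ) →+ (Fin m → ℤ)) (c : Fin m → ℤ)
    (hφ : ∀ v, φ v = T v + c)
    (hbox : ∀ v : Fin n → ℤ, (∀ i, 0 ≤ v i ∧ v i ≤ (p : ℤ) - 1) →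
      ∀ j, 0 ≤ φ v j ∧ φ v j ≤ (p : ℤ) - 1) :
    ∀ j : Fin m,
      (∃ a : ℤ, 0 ≤ a ∧ a ≤ (p : ℤ) - 1 ∧
        ∀ v : Fin n → ℤ, (∀ i, 0 ≤ v i ∧ v i ≤ (p : ℤ) - 1) → φ v j = a) ∨
      (∃ i : Fin n,
        ∀ v : Fin n → ℤ, (∀ i', 0 ≤ v i' ∧ v i' ≤ (p : ℤ) - 1) → φ v j = v i) ∨
      (∃ i : Fin n,
        ∀ v : Fin n → ℤ, (∀ i', 0 ≤ v i' ∧ v i' ≤ (p : ℤ) - 1) →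
          φ v j = (p : ℤ) - 1 - v i) := by
  intro j
  have hp2 : (2 : ℤ) ≤ (p : ℤ) := by exact_mod_cast hp.two_le
  set q : ℤ := (p : ℤ) - 1 with hqdef
  have hq1 : 1 ≤ q := by omega
  set t : Fin n → ℤ := fun i => T (Pi.single i 1) j with ht
  have hT : ∀ v : Fin n → ℤ, T v j = ∑ i, v i * t i := by
    intro v
    have hv : v = ∑ i : Fin n, Pi.single i (v i) := by
      funext k
      simp [Finset.sum_apply, Pi.single_apply]
    calc T v j = ∑ i, T (Pi.single i (v i)) j := by
          conv_lhs => rw [hv]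
          rw [map_sum, Finset.sum_apply]
      _ = ∑ i, v i * t i := by
          refine Finset.sum_congr rfl fun i _ => ?_
          have hsingle1 : Pi.single i (v i) = v i • (Pi.single i (1 : ℤ) : Fin n → ℤ) := by
            funext k'
            rcases eq_or_ne k' i with h | h
            · subst h
              rw [Pi.single_eq_same, Pi.smul_apply, Pi.single_eq_same,
                smul_eq_mul, mul_one]
            · rw [Pi.single_eq_of_ne h, Pi.smul_apply, Pi.single_eq_of_ne h,
                smul_zero]
          rw [hsingle1, map_zsmul, Pi.smul_apply, smul_eq_mul]
  have hφj : ∀ v : Fin n → ℤ, φ v j = (∑ i, v i * t i) + c j := by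
    intro v; rw [hφ]; simp [hT]
  -- sum over a single vector
  have hsum : ∀ (i : Fin n) (a : ℤ), ∑ k, (Pi.single i a : Fin n → ℤ) k * t k = a * t i := by
    intro i a
    rw [Finset.sum_eq_single i]
    · rw [Pi.single_eq_same]
    · intro b _ hb; rw [Pi.single_eq_of_ne hb, zero_mul]
    · intro h; exact absurd (Finset.mem_univ i) h
  have hmemsingle : ∀ i : Fin n, ∀ k, 0 ≤ (Pi.single i q : Fin n → ℤ) k ∧ (Pi.single i q : Fin n → ℤ) k ≤ (p : ℤ) - 1 := by
    intro i k
    rcases eq_or_ne k i with h | h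
    · subst h; rw [Pi.single_eq_same]; omega
    · rw [Pi.single_eq_of_ne h]; omega
  have hc0 : 0 ≤ c j ∧ c j ≤ q := by
    have := hbox 0 (by intro i; constructor <;> simp <;> omega) j
    rwa [hφj, Finset.sum_eq_zero (by intro i _; simp), zero_add] at this
  have hsingle : ∀ i : Fin n, 0 ≤ q * t i + c j ∧ q * t i + c j ≤ q := by
    intro i
    have := hbox (Pi.single i q) (hmemsingle i) j
    rwa [hφj, hsum] at this
  have hdouble : ∀ i k : Fin n, i ≠ k →
      0 ≤ q * t i + q * t k + c j ∧ q * t i + q * t k + c j ≤ q := by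
    intro i k hik
    have hmem : ∀ k', 0 ≤ ((Pi.single i q + Pi.single k q : Fin n → ℤ)) k' ∧
        ((Pi.single i q + Pi.single k q : Fin n → ℤ)) k' ≤ (p : ℤ) - 1 := by
      intro k'
      have h1 := hmemsingle i k'
      have h2 := hmemsingle k k'
      rcases eq_or_ne k' i with h | h
      · subst h
        rw [Pi.add_apply, Pi.single_eq_same,
          Pi.single_eq_of_ne hik, add_zero]
        omega
      · rw [Pi.add_apply, Pi.single_eq_of_ne h, zero_add]
        omega
    have := hbox (Pi.single i q + Pi.single k q) hmem j
    have hsplit : ∑ k', ((Pi.single i q + Pi.single k q : Fin n → ℤ)) k' * t k'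
        = q * t i + q * t k := by
      have : ∀ k', ((Pi.single i q + Pi.single k q : Fin n → ℤ)) k' * t k'
          = (Pi.single i q : Fin n → ℤ) k' * t k' + (Pi.single k q : Fin n → ℤ) k' * t k' := by
        intro k'; simp [add_mul]
      rw [Finset.sum_congr rfl (fun k' _ => this k'), Finset.sum_add_distrib,
        hsum, hsum]
    rwa [hφj, hsplit] at this
  -- each coefficient is in {-1,0,1}
  have hrange : ∀ i : Fin n, -1 ≤ t i ∧ t i ≤ 1 := by
    intro i
    have h1 := hsingle i
    constructor
    · by_contra h
      push_neg at h
      have : t i ≤ -2 := by omega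
      nlinarith [hc0.1, hc0.2]
    · by_contra h
      push_neg at h
      have : 2 ≤ t i := by omega
      nlinarith [hc0.1, hc0.2]
  by_cases hall : ∀ i, t i = 0
  · left
    refine ⟨c j, hc0.1, hc0.2, ?_⟩
    intro v _
    rw [hφj, Finset.sum_eq_zero (by intro i _; simp [hall i]), zero_add]
  · push_neg at hall
    obtain ⟨i, hi⟩ := hall
    have hti := hrange i
    rcases (by omega : t i = 1 ∨ t i = -1) with h1 | h1
    · -- t i = 1 : then c j = 0 and all other coefficients vanish
      have hcj : c j = 0 := by
        have := hsingle i
        rw [h1] at this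
        omega
      have hothers : ∀ k, k ≠ i → t k = 0 := by
        intro k hk
        have hrk := hrange k
        by_contra hne
        rcases (by omega : t k = 1 ∨ t k = -1) with h2 | h2
        · have := hdouble i k (fun h => hk h.symm)
          rw [h1, h2] at this
          omega
        · have := hsingle k
          rw [h2, hcj] at this
          omega
      right; left
      refine ⟨i, ?_⟩
      intro v _
      rw [hφj, hcj, add_zero, Finset.sum_eq_single i]
      · rw [h1, mul_one]
      · intro b _ hb; simp [hothers b hb]
      · intro h; exact absurd (Finset.mem_univ i) h
    · -- t i = -1 : then c j = q and all other coefficients vanish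
      have hcj : c j = q := by
        have := hsingle i
        rw [h1] at this
        omega
      have hothers : ∀ k, k ≠ i → t k = 0 := by
        intro k hk
        have hrk := hrange k
        by_contra hne
        rcases (by omega : t k = 1 ∨ t k = -1) with h2 | h2
        · have := hsingle k
          rw [h2, hcj] at this
          omega
        · have := hdouble i k (fun h => hk h.symm)
          rw [h1, h2, hcj] at this
          omega
      right; right
      refine ⟨i, ?_⟩
      intro v _
      rw [hφj, hcj, Finset.sum_eq_single i]
      · rw [h1]; ring
      · intro b _ hb; simp [hothers b hb]
      · intro h; exact absurd (Finset.mem_univ i) h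
end
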